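/- For every τ ∈ A₀, the system S_τ satisfies the open set condition: for every b ∈ I_τ, φ_b maps the open ball B(1/2, 1/2) = Int(X) into Int(X), and for all distinct b, b′ ∈ I_τ the images φ_b(Int(X)) and φ_{b′}(Int(X)) are disjoint. -/

import Mathlib

open Complex Metric Filter Set
open scoped ENNReal NNReal Topology

noncomputable section

/-- The parameter space `A₀ = {u+iv : u ≥ 0, v ≥ 1}`. -/
def A0 : Set ℂ := {τ : ℂ | 0 ≤ τ.re ∧ 1 ≤ τ.im}

/-- The phase space `X = {z : |z - 1/2| ≤ 1/2}`. -/
def Xcl : Set ℂ := {z : ℂ | ‖z - 1/2‖ ≤ 1/2}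

/-- The alphabet `I_τ = {m + nτ : m, n ∈ ℕ₊}`. -/
def Itau (τ : ℂ) : Set ℂ := {b : ℂ | ∃ m n : ℕ+, b = ((m : ℕ) : ℂ) + ((n : ℕ) : ℂ) * τ}

/-- The generator `φ_b(z) = 1/(z+b)`. -/
def phi (b z : ℂ) : ℂ := 1 / (z + b)


/-! Since `Re b ≥ 1` for `b ∈ I_τ`, each `z + b` with `z ∈ Int(X)` lies in the half-plane
`Re w > 1`, which inversion maps into `Int(X)`. Two points of the lattice `ℤ + ℤτ` with
`Im τ ≥ 1` are at distance at least `1 = diam Int(X)`, so the translates `Int(X) + b` are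
pairwise disjoint, and so are their images under the injective map `w ↦ 1/w`. -/

lemma Xcl_eq_closedBall : Xcl = closedBall (1/2 : ℂ) (1/2) := by
  ext z
  simp [Xcl, Complex.dist_eq]

lemma re_pos_of_mem_ball_half {z : ℂ} (hz : z ∈ ball (1/2 : ℂ) (1/2)) : 0 < z.re := by
  have h := (abs_re_le_norm (z - 1/2)).trans_lt (mem_ball_iff_norm.mp hz)
  rw [sub_re, abs_lt] at h
  norm_num at h
  linarith [h.1]

lemma one_div_mem_ball_half_of_one_lt_re {w : ℂ} (hw : 1 < w.re) :
    1 / w ∈ ball (1/2 : ℂ) (1/2) := by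
  have hw0 : w ≠ 0 := fun h => by norm_num [h] at hw
  have hcloser : ‖2 - w‖ < ‖w‖ := by
    rw [← sq_lt_sq₀ (norm_nonneg _) (norm_nonneg _), Complex.sq_norm, Complex.sq_norm,
      normSq_apply, normSq_apply]
    simp only [sub_re, sub_im, re_ofNat, im_ofNat]
    nlinarith
  rw [mem_ball_iff_norm, show 1 / w - 1/2 = (2 - w) / (2 * w) by field_simp, norm_div,
    norm_mul, Complex.norm_two, div_lt_iff₀ (by positivity)]
  linarith

lemma mapsTo_one_div_add_ball_half {b : ℂ} (hb : 1 ≤ b.re) :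
    MapsTo (fun z => 1 / (z + b)) (ball (1/2 : ℂ) (1/2)) (ball (1/2 : ℂ) (1/2)) := fun z hz =>
  one_div_mem_ball_half_of_one_lt_re (by rw [add_re]; linarith [re_pos_of_mem_ball_half hz])

lemma disjoint_image_one_div_add_ball {𝕜 : Type*} [NormedField 𝕜] {c b b' : 𝕜} {r : ℝ}
    (h : 2 * r ≤ ‖b - b'‖) :
    Disjoint ((fun z => 1 / (z + b)) '' ball c r) ((fun z => 1 / (z + b')) '' ball c r) := by
  rw [disjoint_left]
  rintro _ ⟨z, hz, rfl⟩ ⟨z', hz', heq⟩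
  have hsum : z' + b' = z + b := by simpa only [one_div, inv_inj] using heq
  have hdist : dist z' z < 2 * r := by
    linarith [dist_triangle_right z' z c, mem_ball.mp hz, mem_ball.mp hz']
  rw [dist_eq_norm, show z' - z = b - b' by linear_combination hsum] at hdist
  linarith

lemma eq_zero_of_norm_intCast_add_intCast_mul_lt_one {τ : ℂ} (hτ : 1 ≤ τ.im) {a k : ℤ}
    (h : ‖(a : ℂ) + k * τ‖ < 1) : a = 0 ∧ k = 0 := by
  have hk : k = 0 := by
    have him := (abs_im_le_norm _).trans_lt h
    simp only [add_im, intCast_im, mul_im, intCast_re, zero_mul, zero_add, add_zero,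
      abs_mul] at him
    by_contra hk0
    have : (1 : ℝ) ≤ |(k : ℝ)| := by exact_mod_cast Int.one_le_abs hk0
    nlinarith [abs_nonneg τ.im, le_abs_self τ.im]
  subst hk
  simp only [Int.cast_zero, zero_mul, add_zero, norm_intCast] at h
  exact ⟨Int.abs_lt_one_iff.mp (by exact_mod_cast h), rfl⟩

lemma one_le_re_of_mem_Itau {τ : ℂ} (hτ : 0 ≤ τ.re) {b : ℂ} (hb : b ∈ Itau τ) :
    1 ≤ b.re := by
  obtain ⟨m, n, rfl⟩ := hb
  have hm : (1 : ℝ) ≤ (m : ℕ) := by exact_mod_cast m.pos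
  simp only [add_re, natCast_re, mul_re, natCast_im, zero_mul, sub_zero]
  nlinarith [(n : ℕ).cast_nonneg (α := ℝ)]

lemma one_le_norm_sub_of_mem_Itau {τ : ℂ} (hτ : 1 ≤ τ.im) {b b' : ℂ} (hb : b ∈ Itau τ)
    (hb' : b' ∈ Itau τ) (hne : b ≠ b') : 1 ≤ ‖b - b'‖ := by
  obtain ⟨m, n, rfl⟩ := hb
  obtain ⟨m', n', rfl⟩ := hb'
  by_contra! hlt
  have hsub : ((m : ℕ) + (n : ℕ) * τ) - ((m' : ℕ) + (n' : ℕ) * τ) =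
      (((m : ℤ) - m' : ℤ) : ℂ) + (((n : ℤ) - n' : ℤ) : ℂ) * τ := by
    push_cast; ring
  rw [hsub] at hlt
  obtain ⟨hm, hn⟩ := eq_zero_of_norm_intCast_add_intCast_mul_lt_one hτ hlt
  apply hne
  rw [← sub_eq_zero, hsub, hm, hn]
  simp

/-- The open set condition for `S_τ`. -/
theorem stmt2 :
    ∀ τ ∈ A0,
      ball (1/2 : ℂ) (1/2) = interior Xcl ∧
      (∀ b ∈ Itau τ, (fun z => 1 / (z + b)) '' ball (1/2 : ℂ) (1/2) ⊆ ball (1/2 : ℂ) (1/2)) ∧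
      (∀ b ∈ Itau τ, ∀ b' ∈ Itau τ, b ≠ b' →
        Disjoint ((fun z => 1 / (z + b)) '' ball (1/2 : ℂ) (1/2))
          ((fun z => 1 / (z + b')) '' ball (1/2 : ℂ) (1/2))) := by
  rintro τ ⟨hτre, hτim⟩
  refine ⟨?_, ?_, ?_⟩
  · rw [Xcl_eq_closedBall, interior_closedBall _ (by norm_num)]
  · exact fun b hb => (mapsTo_one_div_add_ball_half (one_le_re_of_mem_Itau hτre hb)).image_subset
  · intro b hb b' hb' hne
    exact disjoint_image_one_div_add_ball
      (by simpa using one_le_norm_sub_of_mem_Itau hτim hb hb' hne)
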